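/- Under the identification ⊕_{d̲} V^{S_{d̲}} ≅ (V ⊗ E^{⊗d})^{S_d} given by v ↦ (1/d!)∑_{x∈S_d} x(v)⊗x(θ_{d̲}), the Chevalley generator E_a of gl_n acts on the summand V^{S_{d̲}} (when d_{a+1} ≥ 1) as d_{a+1}·Ψ, where Ψ: V^{S_{d̲}} → V^{S_{ẽ_a d̲}} is the symmetrization operator Ψ(v) = (1/|S_{ẽ_a d̲}|) ∑_{w ∈ S_{ẽ_a d̲}} w(v). -/

import Mathlib

/-!
Write `φ(v) = (1/d!) ∑ₓ x(v) ⊗ x(θ)` with `θ` the monotone word of `d̲`. By the Leibniz rule,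
`E_a φ(v)` is the sum, over the `d_{a+1}` positions `m` where `θ` has the letter `a+1`, of the
same expression with `θ` replaced by `θ` with its `m`-th letter lowered to `a`. Lowering the
first such position `p` gives the monotone word `θ'` of `ẽ_a d̲`, and lowering `m` gives
`θ' ∘ (m p)`; the transposition `(m p)` lies in `S_{d̲}` and fixes `v`, so every term equals
`φ'(v)`, where `φ'` is built from `θ'` as `φ` is from `θ`. Dually `φ'` absorbs every
`σ ∈ S_{ẽ_a d̲}`, so `φ'(Ψ v) = φ'(v)`.
-/

open Finset

noncomputable section
open scoped Classical

/-- Words of length `d` in the alphabet `{1, …, n}`. -/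
abbrev Word (d n : ℕ) := Fin d → Fin n

/-- Extend a tuple `c : Fin n → ℕ` by zero to a function `ℕ → ℕ`. -/
def extf (n : ℕ) (c : Fin n → ℕ) : ℕ → ℕ := fun j => if h : j < n then c ⟨j, h⟩ else 0

/-- Partial sums of `f : ℕ → ℕ`. -/
def psum (f : ℕ → ℕ) (i : ℕ) : ℕ := ∑ j ∈ Finset.range i, f j

/-- The index of the block (of the composition `f`) containing position `m`. -/
def bIdx (f : ℕ → ℕ) (m : ℕ) : ℕ := sInf {i | m < psum f (i + 1)}

theorem psum_extf (n : ℕ) (c : Fin n → ℕ) : psum (extf n c) n = ∑ i, c i := by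
  unfold psum
  rw [← Fin.sum_univ_eq_sum_range]
  refine Finset.sum_congr rfl fun i _ => ?_
  simp [extf, i.isLt]

theorem bIdx_lt (n d : ℕ) (c : Fin n → ℕ) (hc : ∑ i, c i = d) (m : Fin d) :
    bIdx (extf n c) m < n := by
  rcases n with _ | n
  · exfalso
    have h0 : d = 0 := by simpa using hc.symm
    have := m.2
    omega
  · have hmem : (m : ℕ) < psum (extf (n + 1) c) (n + 1) := by
      rw [psum_extf, hc]; exact m.2
    have := Nat.sInf_le (show n ∈ {i | (m : ℕ) < psum (extf (n + 1) c) (i + 1)} from hmem)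
    unfold bIdx
    omega

/-- The canonical (monotone) word `θ_{d̲}` of a composition `d̲ = c` of `d`. -/
def wordOf (n d : ℕ) (c : Fin n → ℕ) (hc : ∑ i, c i = d) : Word d n :=
  fun m => ⟨bIdx (extf n c) m, bIdx_lt n d c hc m⟩

/-- The Young subgroup `S_{d̲} ⊆ S_d` of a composition `d̲ = c`. -/
def youngC (n d : ℕ) (c : Fin n → ℕ) : Subgroup (Equiv.Perm (Fin d)) where
  carrier := {σ | ∀ m : Fin d, bIdx (extf n c) (σ m) = bIdx (extf n c) m}
  one_mem' := fun _ => rfl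
  mul_mem' := by
    intro σ τ hσ hτ m
    simpa [Equiv.Perm.mul_apply, hτ m] using hσ (τ m)
  inv_mem' := by
    intro σ hσ m
    have h := hσ (σ⁻¹ m)
    simpa using h.symm

variable (n d : ℕ) (V : Type) [AddCommGroup V] [Module ℂ V]
  (ρ : Representation ℂ (Equiv.Perm (Fin d)) V)

/-- A model for `V ⊗ E^{⊗d}`: functions from words to `V`. -/
abbrev TensV := Word d n → V

/-- The image of `v ∈ V^{S_{d̲}}` under the identification
`⊕_{d̲} V^{S_{d̲}} ≅ (V ⊗ E^{⊗d})^{S_d}`, namely `(1/d!) ∑_{x ∈ S_d} x(v) ⊗ x(θ_{d̲})`. -/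
def phiFun (c : Fin n → ℕ) (hc : ∑ i, c i = d) (v : V) : TensV n d V :=
  fun w => (Nat.factorial d : ℂ)⁻¹ •
    ∑ x : Equiv.Perm (Fin d), if w ∘ x = wordOf n d c hc then ρ x v else 0

/-- The Chevalley generator `E_a` of `gl_n` acting on `V ⊗ E^{⊗d}` (by the Leibniz rule on
the tensor factor `E^{⊗d}`, with `E_a θ_{ja} = θ_{ia}`, `ia = a`, `ja = a + 1`). -/
def chevEV (ia ja : Fin n) : TensV n d V →ₗ[ℂ] TensV n d V where
  toFun x := fun w => ∑ k : Fin d, if w k = ia then x (Function.update w k ja) else 0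
  map_add' x y := by
    funext w
    show (∑ k : Fin d, (_ : V)) = (∑ k : Fin d, (_ : V)) + (∑ k : Fin d, (_ : V))
    rw [← Finset.sum_add_distrib]
    refine Finset.sum_congr rfl fun k _ => ?_
    split <;> simp
  map_smul' c x := by
    funext w
    show (∑ k : Fin d, (_ : V)) = c • (∑ k : Fin d, (_ : V))
    rw [Finset.smul_sum]
    refine Finset.sum_congr rfl fun k _ => ?_
    split <;> simp

/-- The symmetrization operator `Ψ_{d̲', d̲} : V^{S_{d̲}} → V^{S_{d̲'}}`,
`Ψ(v) = (1/|S_{d̲'}|) ∑_{w ∈ S_{d̲'}} w(v)`. -/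
def PsiAvg (c' : Fin n → ℕ) (v : V) : V :=
  (Nat.card (youngC n d c') : ℂ)⁻¹ •
    ∑ σ : Equiv.Perm (Fin d), if σ ∈ youngC n d c' then ρ σ v else 0

lemma Function.apply_eq_and_update_eq_iff {ι β : Type*} [DecidableEq ι] {f g : ι → β} {m : ι}
    {a b : β} : f m = a ∧ Function.update f m b = g ↔ g m = b ∧ f = Function.update g m a := by
  constructor
  · rintro ⟨rfl, rfl⟩
    simp
  · rintro ⟨rfl, rfl⟩
    simp

lemma Function.update_comp_swap {ι β : Type*} [DecidableEq ι] {f : ι → β} {m p : ι}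
    (h : f m = f p) (b : β) :
    Function.update f p b ∘ Equiv.swap m p = Function.update f m b := by
  funext k
  simp only [Function.comp_apply, Equiv.swap_apply_def, Function.update_apply]
  split_ifs <;> simp_all

section OrbitSum

variable {n d V} {α : Type*} [DecidableEq α]

/-- `∑ₓ x(u) ⊗ x(g)` in the model `Word d n → V` of `V ⊗ E^{⊗d}`: the coefficient of `w`
collects the `x` with `w ∘ x = g`. -/
def orbitSum (g : Fin d → α) : V →ₗ[ℂ] (Fin d → α) → V :=
  LinearMap.pi fun w => ∑ x : Equiv.Perm (Fin d), if w ∘ x = g then ρ x else 0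

lemma orbitSum_apply (g : Fin d → α) (u : V) (w : Fin d → α) :
    orbitSum ρ g u w = ∑ x : Equiv.Perm (Fin d), if w ∘ x = g then ρ x u else 0 := by
  simp only [orbitSum, LinearMap.pi_apply, LinearMap.sum_apply]
  exact sum_congr rfl fun x _ => by split_ifs <;> rfl

lemma orbitSum_comp_perm (g : Fin d → α) (τ : Equiv.Perm (Fin d)) (u : V) :
    orbitSum ρ (g ∘ τ) u = orbitSum ρ g (ρ τ u) := by
  funext w
  simp only [orbitSum_apply]
  rw [← Equiv.sum_comp (Equiv.mulRight τ)]
  refine sum_congr rfl fun x _ => ?_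
  simp only [Equiv.coe_mulRight, Equiv.Perm.coe_mul, ← Function.comp_assoc,
    τ.surjective.right_cancellable, map_mul, Module.End.mul_apply]

lemma phiFun_eq_smul_orbitSum (c : Fin n → ℕ) (hc : ∑ i, c i = d) (v : V) :
    phiFun n d V ρ c hc v = (d.factorial : ℂ)⁻¹ • orbitSum ρ (wordOf n d c hc) v := by
  funext w
  simp [phiFun, orbitSum_apply]

lemma chevEV_orbitSum (ia ja : Fin n) (g : Word d n) (u : V) :
    chevEV n d V ia ja (orbitSum ρ g u) =
      ∑ m ∈ univ.filter (g · = ja), orbitSum ρ (Function.update g m ia) u := by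
  funext w
  show ∑ k, (if w k = ia then orbitSum ρ g u (Function.update w k ja) else 0) = _
  simp only [orbitSum_apply, Finset.sum_apply, sum_filter]
  calc ∑ k, (if w k = ia then ∑ x : Equiv.Perm (Fin d),
          if Function.update w k ja ∘ x = g then ρ x u else 0 else 0)
      = ∑ x : Equiv.Perm (Fin d), ∑ m, if w (x m) = ia ∧
          Function.update w (x m) ja ∘ x = g then ρ x u else 0 := by
        simp only [ite_sum_zero, ← ite_and]
        rw [sum_comm]
        exact sum_congr rfl fun x _ => (Equiv.sum_comp x _).symm
    _ = _ := by
        rw [sum_comm]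
        refine sum_congr rfl fun m _ => ?_
        rw [ite_sum_zero]
        refine sum_congr rfl fun x _ => ?_
        rw [Function.update_comp_eq_of_injective _ x.injective, ← ite_and]
        exact if_congr (Function.apply_eq_and_update_eq_iff (f := w ∘ x)) rfl rfl

end OrbitSum

section Blocks

lemma psum_mono (f : ℕ → ℕ) : Monotone (psum f) := fun _ _ h =>
  sum_le_sum_of_subset (range_subset_range.2 h)

lemma psum_succ (f : ℕ → ℕ) (i : ℕ) : psum f (i + 1) = psum f i + f i :=
  sum_range_succ f i

lemma bIdx_eq_iff {f : ℕ → ℕ} {m k : ℕ} (hm : m < psum f k) (i : ℕ) :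
    bIdx f m = i ↔ psum f i ≤ m ∧ m < psum f (i + 1) := by
  have hne : {j | m < psum f (j + 1)}.Nonempty := by
    cases k with
    | zero => simp [psum] at hm
    | succ k => exact ⟨k, hm⟩
  have hmem : m < psum f (bIdx f m + 1) := Nat.sInf_mem hne
  constructor
  · rintro rfl
    refine ⟨?_, hmem⟩
    cases h : bIdx f m with
    | zero => simp [psum]
    | succ j =>
      exact not_lt.1 (Nat.notMem_of_lt_sInf (s := {j | m < psum f (j + 1)})
        (show j < bIdx f m by omega))
  · rintro ⟨hi, hi'⟩
    refine le_antisymm (Nat.sInf_le hi') (not_lt.1 fun hlt => ?_)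
    have := psum_mono f (show bIdx f m + 1 ≤ i from hlt)
    omega

variable {n d}

lemma lt_psum_extf {c : Fin n → ℕ} (hc : ∑ i, c i = d) (m : Fin d) :
    (m : ℕ) < psum (extf n c) n := by
  rw [psum_extf, hc]
  exact m.isLt

lemma wordOf_eq_iff {c : Fin n → ℕ} (hc : ∑ i, c i = d) (m : Fin d) (i : Fin n) :
    wordOf n d c hc m = i ↔ psum (extf n c) i ≤ m ∧ m < psum (extf n c) (i + 1) :=
  Fin.ext_iff.trans (bIdx_eq_iff (lt_psum_extf hc m) i)

lemma card_filter_wordOf_eq {c : Fin n → ℕ} (hc : ∑ i, c i = d) (i : Fin n) :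
    #{m | wordOf n d c hc m = i} = c i := by
  have hci : c i = psum (extf n c) (i + 1) - psum (extf n c) i := by
    simp [psum_succ, extf]
  rw [hci, ← Nat.card_Ico]
  refine card_nbij (i := Fin.val) (fun m hm => ?_) (fun _ _ _ _ => Fin.ext) (fun j hj => ?_)
  · simpa [wordOf_eq_iff] using hm
  · simp only [coe_Ico, Set.mem_Ico] at hj
    have hjd : j < d := by
      have := psum_mono (extf n c) (show (i : ℕ) + 1 ≤ n from i.isLt)
      rw [psum_extf, hc] at this
      omega
    exact ⟨⟨j, hjd⟩, by simpa [wordOf_eq_iff] using hj, rfl⟩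

lemma wordOf_comp_of_mem_youngC {c : Fin n → ℕ} (hc : ∑ i, c i = d)
    {σ : Equiv.Perm (Fin d)} (hσ : σ ∈ youngC n d c) :
    wordOf n d c hc ∘ σ = wordOf n d c hc :=
  funext fun m => Fin.ext (hσ m)

lemma swap_mem_youngC {c : Fin n → ℕ} (hc : ∑ i, c i = d) {m p : Fin d}
    (h : wordOf n d c hc m = wordOf n d c hc p) : Equiv.swap m p ∈ youngC n d c := by
  have h' : bIdx (extf n c) m = bIdx (extf n c) p := congrArg Fin.val h
  intro k
  rw [Equiv.swap_apply_def]
  split_ifs with hkm hkp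
  · rw [hkm, h']
  · rw [hkp, h']
  · rfl

end Blocks

section Raise

variable {n d}

lemma psum_extf_raise {a : ℕ} (ha : a + 1 < n) {c c' : Fin n → ℕ} (h1 : 1 ≤ c ⟨a + 1, ha⟩)
    (hc'def : c' = Function.update
        (Function.update c ⟨a, Nat.lt_of_succ_lt ha⟩ (c ⟨a, Nat.lt_of_succ_lt ha⟩ + 1)) ⟨a + 1, ha⟩
        (c ⟨a + 1, ha⟩ - 1)) (i : ℕ) :
    psum (extf n c') i = psum (extf n c) i + if i = a + 1 then 1 else 0 := by
  subst hc'def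
  induction i with
  | zero => simp [psum]
  | succ i ih =>
    rw [psum_succ, psum_succ, ih]
    unfold extf
    split_ifs <;> simp_all [Fin.ext_iff] <;> omega

lemma wordOf_raise {a : ℕ} (ha : a + 1 < n) {c : Fin n → ℕ} (hc : ∑ i, c i = d)
    (h1 : 1 ≤ c ⟨a + 1, ha⟩) {c' : Fin n → ℕ}
    (hc'def : c' = Function.update
        (Function.update c ⟨a, Nat.lt_of_succ_lt ha⟩ (c ⟨a, Nat.lt_of_succ_lt ha⟩ + 1)) ⟨a + 1, ha⟩
        (c ⟨a + 1, ha⟩ - 1)) (hc' : ∑ i, c' i = d) :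
    ∃ p, wordOf n d c hc p = ⟨a + 1, ha⟩ ∧
      wordOf n d c' hc' = Function.update (wordOf n d c hc) p ⟨a, Nat.lt_of_succ_lt ha⟩ := by
  have hP := psum_extf_raise ha h1 hc'def
  have hext : extf n c (a + 1) = c ⟨a + 1, ha⟩ := dif_pos ha
  have hmono := psum_mono (extf n c)
  have hp : psum (extf n c) (a + 1) < d := by
    have := hmono (show a + 2 ≤ n by omega)
    rw [psum_extf, hc, psum_succ] at this
    omega
  set p : Fin d := ⟨psum (extf n c) (a + 1), hp⟩
  refine ⟨p, (wordOf_eq_iff hc p _).2 ⟨le_rfl, by simp [p, psum_succ]; omega⟩,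
    funext fun m => (wordOf_eq_iff hc' m _).2 ?_⟩
  rw [hP, hP]
  rcases eq_or_ne m p with rfl | hm
  · simpa [p] using hmono a.le_succ
  · obtain ⟨hlo, hhi⟩ := (wordOf_eq_iff hc m _).1 rfl
    have hmp : (m : ℕ) ≠ psum (extf n c) (a + 1) := fun h => hm (Fin.ext h)
    rw [Function.update_of_ne hm]
    generalize (wordOf n d c hc m : ℕ) = j at hlo hhi ⊢
    split_ifs with hj hj' <;> subst_vars <;> omega

end Raise

section Symmetrization

variable {n d V}

lemma orbitSum_psiAvg {c : Fin n → ℕ} (hc : ∑ i, c i = d) (v : V) :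
    orbitSum ρ (wordOf n d c hc) (PsiAvg n d V ρ c v) = orbitSum ρ (wordOf n d c hc) v := by
  have hfix : ∀ σ ∈ univ.filter (· ∈ youngC n d c),
      orbitSum ρ (wordOf n d c hc) (ρ σ v) = orbitSum ρ (wordOf n d c hc) v := fun σ hσ => by
    rw [← orbitSum_comp_perm, wordOf_comp_of_mem_youngC hc (mem_filter.1 hσ).2]
  have hcard : (#(univ.filter (· ∈ youngC n d c)) : ℂ) ≠ 0 := by
    rw [← Fintype.card_subtype, ← Nat.card_eq_fintype_card]
    exact_mod_cast Nat.card_pos.ne'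
  rw [PsiAvg, ← sum_filter, map_smul, map_sum, sum_congr rfl hfix, sum_const,
    ← Nat.cast_smul_eq_nsmul ℂ, smul_smul, Nat.card_eq_fintype_card, Fintype.card_subtype,
    inv_mul_cancel₀ hcard, one_smul]

end Symmetrization

/-- Under the identification `⊕_{d̲} V^{S_{d̲}} ≅ (V ⊗ E^{⊗d})^{S_d}`, the
Chevalley generator `E_a` acts on the summand `V^{S_{d̲}}` (when `d_{a+1} ≥ 1`) as
`d_{a+1} · Ψ`, where `Ψ : V^{S_{d̲}} → V^{S_{ẽ_a d̲}}` is the symmetrization operator. -/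
theorem chevalley_E_is_symmetrization
    (a : ℕ) (ha : a + 1 < n)
    (c : Fin n → ℕ) (hc : ∑ i, c i = d) (h1 : 1 ≤ c ⟨a + 1, ha⟩)
    (c' : Fin n → ℕ)
    (hc'def : c' = Function.update
        (Function.update c ⟨a, by omega⟩ (c ⟨a, by omega⟩ + 1)) ⟨a + 1, ha⟩
        (c ⟨a + 1, ha⟩ - 1))
    (hc' : ∑ i, c' i = d)
    (v : V) (hv : ∀ σ ∈ youngC n d c, ρ σ v = v) :
    chevEV n d V ⟨a, by omega⟩ ⟨a + 1, ha⟩ (phiFun n d V ρ c hc v) =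
      phiFun n d V ρ c' hc'
        (((c ⟨a + 1, ha⟩ : ℕ) : ℂ) • PsiAvg n d V ρ c' v) := by
  obtain ⟨p, hp, hword⟩ := wordOf_raise ha hc h1 hc'def hc'
  have hterm : ∀ m ∈ univ.filter (wordOf n d c hc · = ⟨a + 1, ha⟩),
      orbitSum ρ (Function.update (wordOf n d c hc) m ⟨a, Nat.lt_of_succ_lt ha⟩) v =
        orbitSum ρ (wordOf n d c' hc') v := fun m hm => by
    have hmp := (mem_filter.1 hm).2.trans hp.symm
    rw [hword, ← Function.update_comp_swap hmp, orbitSum_comp_perm, hv _ (swap_mem_youngC hc hmp)]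
  rw [phiFun_eq_smul_orbitSum, phiFun_eq_smul_orbitSum, map_smul, chevEV_orbitSum,
    sum_congr rfl hterm, sum_const, card_filter_wordOf_eq, map_smul, orbitSum_psiAvg,
    Nat.cast_smul_eq_nsmul]

end
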